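/- Strict inequality in the interior: if u is a positive solution of u = g_α ∗ u^β and u(x) ≥ u_{λ₀}(x) on Σ_{λ₀} with the set {x ∈ Σ_{λ₀} : u(x) > u_{λ₀}(x)} of positive measure, then u(x) > u_{λ₀}(x) for every x in the interior of Σ_{λ₀} (i.e. with x₁ > λ₀). -/

import Mathlib

open MeasureTheory Real

noncomputable def besselKernel (n : ℕ) (α : ℝ) (x : EuclideanSpace ℝ (Fin n)) : ℝ :=
  (1 / ((4 * Real.pi) ^ (α / 2) * Real.Gamma (α / 2))) *
    ∫ δ in Set.Ioi (0 : ℝ),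
      Real.exp (-Real.pi * ‖x‖ ^ 2 / δ) * Real.exp (-δ / (4 * Real.pi)) *
        δ ^ ((-(n : ℝ) + α) / 2 - 1)

noncomputable def reflect (n : ℕ) [NeZero n] (l : ℝ) (x : EuclideanSpace ℝ (Fin n)) :
    EuclideanSpace ℝ (Fin n) :=
  WithLp.toLp 2 (Function.update x 0 (2 * l - x 0))

/-!
Folding the part of `u = g_α ∗ u^β` over `{y₀ < λ}` onto `{y₀ > λ}` by the reflection, and using
that `g_α` is radial, gives
`u x - u xˡ = ∫_{y₀ > λ} (g_α (x - y) - g_α (xˡ - y)) (u y ^ β - u yˡ ^ β) dy`.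
For `x, y` in the open half-space `|x - y| < |xˡ - y|`, so the first factor is positive because
`g_α` is strictly radially decreasing; the second is nonnegative, and positive on a set of positive
measure.
-/

section Reflection

variable {n : ℕ} [NeZero n] {l : ℝ}

noncomputable def negFirstCoord (n : ℕ) [NeZero n] :
    EuclideanSpace ℝ (Fin n) ≃ₗᵢ[ℝ] EuclideanSpace ℝ (Fin n) :=
  LinearIsometryEquiv.piLpCongrRight 2
    fun i => if i = 0 then LinearIsometryEquiv.neg ℝ else LinearIsometryEquiv.refl ℝ ℝ

lemma negFirstCoord_apply (x : EuclideanSpace ℝ (Fin n)) (i : Fin n) :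
    negFirstCoord n x i = if i = 0 then -x i else x i := by
  simp only [negFirstCoord, LinearIsometryEquiv.piLpCongrRight_apply]
  split <;> simp

@[simp]
lemma reflect_apply_zero (x : EuclideanSpace ℝ (Fin n)) : reflect n l x 0 = 2 * l - x 0 := by
  simp [reflect]

lemma reflect_apply_of_ne (x : EuclideanSpace ℝ (Fin n)) {i : Fin n} (hi : i ≠ 0) :
    reflect n l x i = x i := by
  simp [reflect, hi]

lemma reflect_eq_negFirstCoord_add (x : EuclideanSpace ℝ (Fin n)) :
    reflect n l x = negFirstCoord n x + EuclideanSpace.single 0 (2 * l) := by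
  ext i
  by_cases hi : i = 0
  · subst hi; simp [negFirstCoord_apply]; ring
  · simp [reflect_apply_of_ne x hi, negFirstCoord_apply, hi]

lemma reflect_involutive : Function.Involutive (reflect n l) := by
  intro x
  ext i
  by_cases hi : i = 0
  · subst hi; simp
  · simp [reflect_apply_of_ne _ hi]

lemma reflect_eq_self {x : EuclideanSpace ℝ (Fin n)} (hx : x 0 = l) : reflect n l x = x := by
  ext i
  by_cases hi : i = 0
  · subst hi; simp; linarith
  · exact reflect_apply_of_ne x hi

lemma continuous_reflect : Continuous (reflect n l) := by
  rw [funext reflect_eq_negFirstCoord_add]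
  exact (negFirstCoord n).continuous.add continuous_const

lemma measurableEmbedding_reflect : MeasurableEmbedding (reflect n l) :=
  .of_measurable_inverse continuous_reflect.measurable
    (by rw [reflect_involutive.surjective.range_eq]; exact .univ) continuous_reflect.measurable
    reflect_involutive

lemma measurePreserving_reflect : MeasurePreserving (reflect n l) volume volume := by
  rw [funext reflect_eq_negFirstCoord_add]
  exact (measurePreserving_add_right volume _).comp (negFirstCoord n).measurePreserving

lemma integrable_comp_reflect {f : EuclideanSpace ℝ (Fin n) → ℝ} (hf : Integrable f) :
    Integrable (fun y => f (reflect n l y)) :=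
  (measurePreserving_reflect.integrable_comp_emb measurableEmbedding_reflect).2 hf

lemma norm_reflect_sub_reflect (x y : EuclideanSpace ℝ (Fin n)) :
    ‖reflect n l x - reflect n l y‖ = ‖x - y‖ := by
  rw [reflect_eq_negFirstCoord_add, reflect_eq_negFirstCoord_add, add_sub_add_right_eq_sub,
    ← map_sub, LinearIsometryEquiv.norm_map]

lemma norm_sub_reflect_comm (x y : EuclideanSpace ℝ (Fin n)) :
    ‖x - reflect n l y‖ = ‖reflect n l x - y‖ := by
  conv_rhs => rw [← reflect_involutive (l := l) y, norm_reflect_sub_reflect]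

lemma norm_sub_reflect_sq (x y : EuclideanSpace ℝ (Fin n)) :
    ‖x - reflect n l y‖ ^ 2 = ‖x - y‖ ^ 2 + 4 * (x 0 - l) * (y 0 - l) := by
  simp only [EuclideanSpace.norm_sq_eq, PiLp.sub_apply, Real.norm_eq_abs, sq_abs]
  rw [← Finset.add_sum_erase _ _ (Finset.mem_univ 0),
    ← Finset.add_sum_erase _ (fun i => (x i - y i) ^ 2) (Finset.mem_univ 0),
    Finset.sum_congr rfl fun i hi => by rw [reflect_apply_of_ne y (Finset.ne_of_mem_erase hi)],
    reflect_apply_zero]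
  ring

lemma norm_sub_lt_norm_sub_reflect {x y : EuclideanSpace ℝ (Fin n)} (hx : l < x 0)
    (hy : l < y 0) : ‖x - y‖ < ‖x - reflect n l y‖ := by
  have h := norm_sub_reflect_sq (l := l) x y
  nlinarith [norm_nonneg (x - y), norm_nonneg (x - reflect n l y),
    mul_pos (sub_pos.2 hx) (sub_pos.2 hy)]

lemma volume_setOf_apply_zero_eq : volume {y : EuclideanSpace ℝ (Fin n) | y 0 = l} = 0 := by
  let H : AffineSubspace ℝ (EuclideanSpace ℝ (Fin n)) := (AffineSubspace.mk' l ⊥).comap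
    (EuclideanSpace.proj (0 : Fin n) : _ →L[ℝ] ℝ).toLinearMap.toAffineMap
  have hH : H ≠ ⊤ := by
    intro h
    have : EuclideanSpace.single 0 (l + 1) ∈ H := h ▸ AffineSubspace.mem_top ℝ _ _
    simp [H] at this
  convert Measure.addHaar_affineSubspace volume H hH
  ext y
  simp [H, AffineSubspace.mem_mk', sub_eq_zero]

lemma integral_eq_setIntegral_add_reflect {f : EuclideanSpace ℝ (Fin n) → ℝ}
    (hf : Integrable f) :
    ∫ y, f y = ∫ y in {y | l < y 0}, (f y + f (reflect n l y)) := by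
  have hS : MeasurableSet {y : EuclideanSpace ℝ (Fin n) | l < y 0} :=
    measurableSet_lt measurable_const (by fun_prop)
  have hpre : reflect n l ⁻¹' {y | y 0 < l} = {y | l < y 0} := by
    ext y
    simp only [Set.mem_preimage, Set.mem_ofPred_eq, reflect_apply_zero]
    constructor <;> intro <;> linarith
  have hcompl : ({y | l < y 0}ᶜ : Set (EuclideanSpace ℝ (Fin n))) =ᵐ[volume] {y | y 0 < l} := by
    filter_upwards [measure_eq_zero_iff_ae_notMem.1 (volume_setOf_apply_zero_eq (l := l))]
      with y hy
    change (¬ l < y 0) = (y 0 < l)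
    exact propext (not_lt.trans (Ne.le_iff_lt hy))
  rw [integral_add hf.integrableOn (integrable_comp_reflect hf).integrableOn,
    ← integral_add_compl hS hf, setIntegral_congr_set hcompl, ← hpre,
    measurePreserving_reflect.setIntegral_preimage_emb measurableEmbedding_reflect]

end Reflection

section BesselKernel

noncomputable def besselIntegrand (p r δ : ℝ) : ℝ :=
  exp (-π * r ^ 2 / δ) * exp (-δ / (4 * π)) * δ ^ p

lemma besselKernel_eq_integral_besselIntegrand (n : ℕ) (α : ℝ) (x : EuclideanSpace ℝ (Fin n)) :
    besselKernel n α x = 1 / ((4 * π) ^ (α / 2) * Gamma (α / 2)) *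
      ∫ δ in Set.Ioi 0, besselIntegrand ((-(n : ℝ) + α) / 2 - 1) ‖x‖ δ :=
  rfl

lemma besselIntegrand_lt_of_lt {p r₁ r₂ δ : ℝ} (h₁ : 0 ≤ r₁) (h₁₂ : r₁ < r₂) (hδ : 0 < δ) :
    besselIntegrand p r₂ δ < besselIntegrand p r₁ δ := by
  have hsq : π * r₁ ^ 2 / δ < π * r₂ ^ 2 / δ := by gcongr
  unfold besselIntegrand
  gcongr exp ?_ * _ * _
  rw [neg_mul, neg_mul, neg_div, neg_div]
  exact neg_lt_neg hsq

lemma integrableOn_besselIntegrand (p : ℝ) {r : ℝ} (hr : 0 < r) :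
    IntegrableOn (besselIntegrand p r) (Set.Ioi 0) := by
  -- `exp (-c / δ) ≤ m! c⁻ᵐ δᵐ` with `m + p > -1` tames the singularity at `0`.
  set c := π * r ^ 2
  have hc : 0 < c := by positivity
  set m := ⌈-p⌉₊
  have hmp : -1 < (m : ℝ) + p := by linarith [Nat.le_ceil (-p)]
  have hdom := ((integrableOn_rpow_mul_exp_neg_mul_rpow hmp one_pos
    (by positivity : 0 < 1 / (4 * π))).const_mul (m.factorial / c ^ m))
  refine hdom.mono' ?_ ((ae_restrict_iff' measurableSet_Ioi).2 (.of_forall fun δ hδ => ?_))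
  · unfold besselIntegrand
    fun_prop
  have hδ : 0 < δ := hδ
  have hexp : exp (-c / δ) ≤ m.factorial / c ^ m * δ ^ m := by
    rw [neg_div, exp_neg, inv_le_iff_one_le_mul₀ (exp_pos _)]
    calc (1 : ℝ) = m.factorial / c ^ m * δ ^ m * ((c / δ) ^ m / m.factorial) := by
          rw [div_pow]
          field_simp
      _ ≤ m.factorial / c ^ m * δ ^ m * exp (c / δ) := by
          gcongr
          exact pow_div_factorial_le_exp _ (by positivity) m
  rw [norm_of_nonneg (by unfold besselIntegrand; positivity), rpow_one, rpow_add hδ,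
    rpow_natCast]
  calc besselIntegrand p r δ = exp (-c / δ) * exp (-δ / (4 * π)) * δ ^ p := by
        simp only [besselIntegrand, c, neg_mul]
    _ ≤ m.factorial / c ^ m * δ ^ m * exp (-δ / (4 * π)) * δ ^ p := by gcongr
    _ = _ := by ring_nf

lemma integral_besselIntegrand_lt_of_lt (p : ℝ) {r₁ r₂ : ℝ} (h₁ : 0 < r₁) (h₁₂ : r₁ < r₂) :
    ∫ δ in Set.Ioi 0, besselIntegrand p r₂ δ < ∫ δ in Set.Ioi 0, besselIntegrand p r₁ δ := by
  have hi₁ := integrableOn_besselIntegrand p h₁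
  have hi₂ := integrableOn_besselIntegrand p (h₁.trans h₁₂)
  have hlt : ∀ δ ∈ Set.Ioi (0 : ℝ), besselIntegrand p r₂ δ < besselIntegrand p r₁ δ :=
    fun δ hδ => besselIntegrand_lt_of_lt h₁.le h₁₂ hδ
  rw [← sub_pos, ← integral_sub hi₁ hi₂, setIntegral_pos_iff_support_of_nonneg_ae
    ((ae_restrict_iff' measurableSet_Ioi).2 (.of_forall fun δ hδ => (sub_pos.2 (hlt δ hδ)).le))
    (hi₁.sub hi₂)]
  calc (0 : ENNReal) < volume (Set.Ioi (0 : ℝ)) := by simp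
    _ ≤ _ := measure_mono fun δ hδ => Set.mem_inter (sub_pos.2 (hlt δ hδ)).ne' hδ

variable (n : ℕ) {α : ℝ}

lemma besselKernel_eq_of_norm_eq {a b : EuclideanSpace ℝ (Fin n)} (h : ‖a‖ = ‖b‖) :
    besselKernel n α a = besselKernel n α b := by
  rw [besselKernel_eq_integral_besselIntegrand, besselKernel_eq_integral_besselIntegrand, h]

lemma besselKernel_lt_of_norm_lt (hα : 0 < α) {a b : EuclideanSpace ℝ (Fin n)} (ha : 0 < ‖a‖)
    (hab : ‖a‖ < ‖b‖) : besselKernel n α b < besselKernel n α a := by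
  rw [besselKernel_eq_integral_besselIntegrand, besselKernel_eq_integral_besselIntegrand]
  have : 0 < Gamma (α / 2) := Gamma_pos_of_pos (by positivity)
  gcongr
  exact integral_besselIntegrand_lt_of_lt _ ha hab

end BesselKernel

section MovingPlane

variable {n : ℕ} [NeZero n] {l : ℝ} {G v : EuclideanSpace ℝ (Fin n) → ℝ}

lemma kernel_sub_mul_add_reflect (hG : ∀ a b, ‖a‖ = ‖b‖ → G a = G b)
    (x y : EuclideanSpace ℝ (Fin n)) :
    (G (x - y) - G (reflect n l x - y)) * v y +
        (G (x - reflect n l y) - G (reflect n l x - reflect n l y)) * v (reflect n l y) =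
      (G (x - y) - G (reflect n l x - y)) * (v y - v (reflect n l y)) := by
  rw [hG _ _ (norm_sub_reflect_comm x y), hG _ _ (norm_reflect_sub_reflect x y)]
  ring

theorem integral_kernel_reflect_lt (hG : ∀ a b, ‖a‖ = ‖b‖ → G a = G b)
    (hG_lt : ∀ a b, 0 < ‖a‖ → ‖a‖ < ‖b‖ → G b < G a)
    (hint : ∀ z, Integrable (fun y => G (z - y) * v y))
    (hge : ∀ y, l ≤ y 0 → v (reflect n l y) ≤ v y)
    (hpos : 0 < volume {y | l ≤ y 0 ∧ v (reflect n l y) < v y})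
    {x : EuclideanSpace ℝ (Fin n)} (hx : l < x 0) :
    ∫ y, G (reflect n l x - y) * v y < ∫ y, G (x - y) * v y := by
  set R := reflect n l
  set S := {y : EuclideanSpace ℝ (Fin n) | l < y 0}
  have hS : MeasurableSet S := measurableSet_lt measurable_const (by fun_prop)
  let f y := (G (x - y) - G (R x - y)) * v y
  let W y := (G (x - y) - G (R x - y)) * (v y - v (R y))
  have hf : Integrable f :=
    ((hint x).sub (hint (R x))).congr (.of_forall fun y => (sub_mul _ _ _).symm)
  have hfW : ∀ y, f y + f (R y) = W y := kernel_sub_mul_add_reflect hG x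
  have hW : Integrable W := (hf.add (integrable_comp_reflect hf)).congr (.of_forall hfW)
  have hkernel : ∀ y ∈ S, y ≠ x → G (R x - y) < G (x - y) := by
    intro y hy hyx
    refine hG_lt _ _ (norm_pos_iff.2 (sub_ne_zero.2 hyx.symm)) ?_
    rw [← norm_sub_reflect_comm]
    exact norm_sub_lt_norm_sub_reflect hx hy
  have hW_nonneg : 0 ≤ᵐ[volume.restrict S] W := by
    refine (ae_restrict_iff' hS).2 ?_
    filter_upwards [compl_mem_ae_iff.2 (measure_singleton x)] with y hyx hy
    exact mul_nonneg (sub_pos.2 (hkernel y hy hyx)).le (sub_nonneg.2 (hge y hy.le))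
  have hW_support : {y | l ≤ y 0 ∧ v (R y) < v y} \ {x} ⊆ Function.support W ∩ S := by
    rintro y ⟨⟨hy, hvy⟩, hyx⟩
    have hyS : l < y 0 := hy.lt_of_ne fun h =>
      lt_irrefl (v y) (by rwa [show R y = y from reflect_eq_self h.symm] at hvy)
    exact ⟨(mul_pos (sub_pos.2 (hkernel y hyS hyx)) (sub_pos.2 hvy)).ne', hyS⟩
  rw [← sub_pos, ← integral_sub (hint x) (hint (R x))]
  calc 0 < ∫ y in S, W y :=
        (setIntegral_pos_iff_support_of_nonneg_ae hW_nonneg hW.integrableOn).2 <| hpos.trans_le <|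
          (measure_sdiff_null (measure_singleton x)).ge.trans (measure_mono hW_support)
    _ = ∫ y in S, (f y + f (R y)) := by simp only [hfW]
    _ = ∫ y, f y := (integral_eq_setIntegral_add_reflect hf).symm
    _ = _ := by simp only [f, sub_mul]

end MovingPlane

theorem strict_inequality_interior_general (n : ℕ) [NeZero n]
    (α β : ℝ) (hα : 0 < α) (hβ : 1 < β)
    (u : EuclideanSpace ℝ (Fin n) → ℝ) (hupos : ∀ x, 0 < u x)
    (heq : ∀ x, u x = ∫ y, besselKernel n α (x - y) * u y ^ β)
    (l₀ : ℝ)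
    (hge : ∀ x : EuclideanSpace ℝ (Fin n), l₀ ≤ x 0 → u (reflect n l₀ x) ≤ u x)
    (hpos : 0 < volume {x : EuclideanSpace ℝ (Fin n) | l₀ ≤ x 0 ∧ u (reflect n l₀ x) < u x}) :
    ∀ x : EuclideanSpace ℝ (Fin n), l₀ < x 0 → u (reflect n l₀ x) < u x := by
  intro x hx
  have hβ₀ : 0 < β := by linarith
  -- A non-integrable integrand would have integral `0`, contradicting `u z > 0`.
  have hint (z : EuclideanSpace ℝ (Fin n)) :
      Integrable (fun y => besselKernel n α (z - y) * u y ^ β) :=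
    .of_integral_ne_zero (heq z ▸ (hupos z).ne')
  have hset : {y : EuclideanSpace ℝ (Fin n) | l₀ ≤ y 0 ∧ u (reflect n l₀ y) ^ β < u y ^ β} =
      {y | l₀ ≤ y 0 ∧ u (reflect n l₀ y) < u y} := by
    ext y
    simp only [Set.mem_ofPred_eq, rpow_lt_rpow_iff (hupos _).le (hupos _).le hβ₀]
  rw [heq x, heq (reflect n l₀ x)]
  exact integral_kernel_reflect_lt (fun _ _ => besselKernel_eq_of_norm_eq n)
    (fun _ _ => besselKernel_lt_of_norm_lt n hα) hint
    (fun y hy => rpow_le_rpow (hupos _).le (hge y hy) hβ₀.le) (hset ▸ hpos) hx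

theorem strict_inequality_interior (n : ℕ) [NeZero n] (hn : 1 ≤ n)
    (α β : ℝ) (hα : 0 < α) (hβ : 1 < β)
    (u : EuclideanSpace ℝ (Fin n) → ℝ) (hupos : ∀ x, 0 < u x) (hucont : Continuous u)
    (heq : ∀ x, u x = ∫ y, besselKernel n α (x - y) * u y ^ β)
    (l₀ : ℝ)
    (hge : ∀ x : EuclideanSpace ℝ (Fin n), l₀ ≤ x 0 → u (reflect n l₀ x) ≤ u x)
    (hpos : 0 < volume {x : EuclideanSpace ℝ (Fin n) | l₀ ≤ x 0 ∧ u (reflect n l₀ x) < u x}) :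
    ∀ x : EuclideanSpace ℝ (Fin n), l₀ < x 0 → u (reflect n l₀ x) < u x :=
  strict_inequality_interior_general n α β hα hβ u hupos heq l₀ hge hpos
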